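/- arXiv:2310.19490 — 8 statements merged into one kernel-verified Lean document; each statement's English description precedes it below -/
import Mathlib

section
/- Let A be the 3-dimensional complex 3-Lie algebra with [e1,e2,e3] = e1. A linear map T with matrix (a_{ij}) (i.e., T(e_i) = Σ_j a_{ij} e_j) is an O-operator with respect to the adjoint representation if and only if the following three equations hold: (1) a12(a11 a21 − a21 a33 + a23 a31) + a13(a21 a32 + a11 a31 − a22 a31) − a11^2(a22 + a33) = 0; (2) a12(a11 a22 − a12 a21 − a31 a13 + a33 a11 + a22 a33 − a23 a32) = 0; (3) a13(a11 a22 − a12 a21 − a13 a31 + a33 a11 + a22 a33 − a23 a32) = 0. -/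
/-!
Write `T x = x ᵥ* A`. The bracket is `[x, y, z] = det (x, y, z) • e₁`, so
`[Tx, Ty, Tz] = det (x, y, z) * det A • e₁`, while the cyclic sum
`det (Tx, Ty, z) + det (Ty, Tz, x) + det (Tz, Tx, y)` equals `det (x, y, z)` times the sum
`secondInvariant A` of the principal `2 × 2` minors of `A`. Hence `T` is an `𝒪`-operator iff
`det A • e₁ = secondInvariant A • T e₁`, and the three coordinates of this identity are the three
equations.
-/

open Finset

/-- The standard basis of `ℂ³`: `e 0 = e₁`, `e 1 = e₂`, `e 2 = e₃`. -/
def e (i : Fin 3) : Fin 3 → ℂ := fun j => if j = i then 1 else 0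

/-- The trilinear skew-symmetric bracket on `ℂ³` determined by `[e₁,e₂,e₃] = e₁`. -/
def br (x y z : Fin 3 → ℂ) : Fin 3 → ℂ := fun i =>
  if i = 0 then
    x 0 * (y 1 * z 2 - y 2 * z 1) - x 1 * (y 0 * z 2 - y 2 * z 0)
      + x 2 * (y 0 * z 1 - y 1 * z 0)
  else 0

/-- `T` is an `𝒪`-operator with respect to the adjoint representation. -/
def IsOOperator (T : (Fin 3 → ℂ) →ₗ[ℂ] (Fin 3 → ℂ)) : Prop :=
  ∀ x y z : Fin 3 → ℂ, br (T x) (T y) (T z) =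
    T (br (T x) (T y) z + br (T y) (T z) x + br (T z) (T x) y)

namespace Matrix

variable {R : Type*} [CommRing R]

def secondInvariant (A : Matrix (Fin 3) (Fin 3) R) : R :=
  A 0 0 * A 1 1 - A 0 1 * A 1 0 + A 0 0 * A 2 2 - A 0 2 * A 2 0 + A 1 1 * A 2 2 - A 1 2 * A 2 1

theorem det_of_vecMul (A : Matrix (Fin 3) (Fin 3) R) (x y z : Fin 3 → R) :
    det (of ![x ᵥ* A, y ᵥ* A, z ᵥ* A]) = det (of ![x, y, z]) * det A := by
  rw [← det_mul]
  congr 1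
  ext i j
  fin_cases i <;> rfl

theorem det_of_vecMul_cyclic (A : Matrix (Fin 3) (Fin 3) R) (x y z : Fin 3 → R) :
    det (of ![x ᵥ* A, y ᵥ* A, z]) + det (of ![y ᵥ* A, z ᵥ* A, x])
      + det (of ![z ᵥ* A, x ᵥ* A, y]) = det (of ![x, y, z]) * secondInvariant A := by
  simp only [det_fin_three, of_apply, cons_val, vecMul, dotProduct, Fin.sum_univ_three,
    secondInvariant]
  ring

end Matrix

open Matrix

theorem e_eq_single (i : Fin 3) : e i = Pi.single i 1 := by
  funext j
  simp [e, Pi.single_apply]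

theorem br_eq_det_smul (x y z : Fin 3 → ℂ) : br x y z = det (of ![x, y, z]) • e 0 := by
  funext i
  fin_cases i <;> simp [br, e, det_fin_three]
  ring

theorem sum_smul_e (v : Fin 3 → ℂ) : ∑ j, v j • e j = v := by
  simpa [e_eq_single] using (pi_eq_sum_univ' v).symm

theorem e_vecMul (A : Matrix (Fin 3) (Fin 3) ℂ) (i : Fin 3) : e i ᵥ* A = A i := by
  rw [e_eq_single, single_one_vecMul]
  rfl

theorem det_of_e : det (of ![e 0, e 1, e 2]) = 1 := by
  simp [det_fin_three, e]

theorem apply_eq_vecMul {T : (Fin 3 → ℂ) →ₗ[ℂ] (Fin 3 → ℂ)} {A : Matrix (Fin 3) (Fin 3) ℂ}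
    (hT : ∀ i, T (e i) = A i) (x : Fin 3 → ℂ) : T x = x ᵥ* A := by
  calc T x = T (∑ i, x i • e i) := by rw [sum_smul_e]
    _ = ∑ i, x i • A i := by simp only [map_sum, map_smul, hT]
    _ = x ᵥ* A := (vecMul_eq_sum x A).symm

theorem isOOperator_iff_det_smul_e_eq {T : (Fin 3 → ℂ) →ₗ[ℂ] (Fin 3 → ℂ)}
    {A : Matrix (Fin 3) (Fin 3) ℂ} (hT : ∀ x, T x = x ᵥ* A) :
    IsOOperator T ↔ det A • e 0 = secondInvariant A • A 0 := by
  have key (x y z : Fin 3 → ℂ) :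
      br (T x) (T y) (T z) = T (br (T x) (T y) z + br (T y) (T z) x + br (T z) (T x) y) ↔
        det (of ![x, y, z]) • (det A • e 0) = det (of ![x, y, z]) • (secondInvariant A • A 0) := by
    simp only [br_eq_det_smul, hT, ← add_smul, det_of_vecMul, det_of_vecMul_cyclic, smul_vecMul,
      e_vecMul, mul_smul]
  refine ⟨fun h => ?_, fun h x y z => (key x y z).2 (by rw [h])⟩
  simpa [det_of_e] using (key (e 0) (e 1) (e 2)).1 (h _ _ _)

theorem det_smul_e_eq_iff (A : Matrix (Fin 3) (Fin 3) ℂ) :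
    det A • e 0 = secondInvariant A • A 0 ↔
      det A - secondInvariant A * A 0 0 = 0 ∧ A 0 1 * secondInvariant A = 0 ∧
        A 0 2 * secondInvariant A = 0 := by
  simp [funext_iff, Fin.forall_fin_succ, e, sub_eq_zero, or_comm]

/-- A linear map with matrix `(aᵢⱼ)` (here `a i j = a_{(i+1)(j+1)}`) is an `𝒪`-operator
for the 3-dimensional 3-Lie algebra `[e₁,e₂,e₃] = e₁` iff the three stated equations hold. -/
theorem o_operator_iff_three_equations (T : (Fin 3 → ℂ) →ₗ[ℂ] (Fin 3 → ℂ))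
    (a : Fin 3 → Fin 3 → ℂ) (hT : ∀ i, T (e i) = ∑ j, a i j • e j) :
    IsOOperator T ↔
      (a 0 1 * (a 0 0 * a 1 0 - a 1 0 * a 2 2 + a 1 2 * a 2 0)
          + a 0 2 * (a 1 0 * a 2 1 + a 0 0 * a 2 0 - a 1 1 * a 2 0)
          - a 0 0 ^ 2 * (a 1 1 + a 2 2) = 0 ∧
        a 0 1 * (a 0 0 * a 1 1 - a 0 1 * a 1 0 - a 2 0 * a 0 2 + a 2 2 * a 0 0
          + a 1 1 * a 2 2 - a 1 2 * a 2 1) = 0 ∧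
        a 0 2 * (a 0 0 * a 1 1 - a 0 1 * a 1 0 - a 0 2 * a 2 0 + a 2 2 * a 0 0
          + a 1 1 * a 2 2 - a 1 2 * a 2 1) = 0) := by
  have hA : ∀ i, T (e i) = of a i := fun i => (hT i).trans (sum_smul_e (a i))
  rw [isOOperator_iff_det_smul_e_eq (apply_eq_vecMul hA), det_smul_e_eq_iff]
  simp only [det_fin_three, secondInvariant, of_apply]
  ring_nf
end

section
/- Let A be the 3-dimensional complex 3-Lie algebra with [e1,e2,e3] = e1, and let T be the linear map with matrix O_4: T(e1) = a13 e3, T(e2) = a23 e3, T(e3) = −(a23/a13) e1 + e2 + a33 e3, where a13 ≠ 0. Then T is an O-operator with respect to the adjoint representation. -/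
open Finset

/-! Since `[x, y, z] = det (x, y, z) • e₁`, and `det (Tx, Ty, z) + det (Ty, Tz, x) + det (Tz, Tx, y)`
is `σ₂(T) • det (x, y, z)`, the `𝒪`-operator identity for `x, y, z` is `det (x, y, z)` times the single
vector identity `det T • e₁ = σ₂(T) • T e₁`. For the matrix `O₄` both sides vanish: its first two
columns are proportional, so `det T = 0`, and `σ₂(T) = (a₂₃ / a₁₃) a₁₃ - a₂₃ = 0`. -/

namespace Matrix

variable {R : Type*} [CommRing R]

/-- `σ₂(M)`, the coefficient in `charpoly M = X³ - tr M • X² + σ₂(M) • X - det M`. -/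
def principalMinorsSum (M : Matrix (Fin 3) (Fin 3) R) : R :=
  (M 0 0 * M 1 1 - M 0 1 * M 1 0) + (M 0 0 * M 2 2 - M 0 2 * M 2 0)
    + (M 1 1 * M 2 2 - M 1 2 * M 2 1)

theorem det_of_mulVec_three (M : Matrix (Fin 3) (Fin 3) R) (x y z : Fin 3 → R) :
    det (of ![M *ᵥ x, M *ᵥ y, M *ᵥ z]) = det M * det (of ![x, y, z]) := by
  simp only [det_fin_three, of_apply, cons_val', cons_val_fin_one, cons_val_zero, cons_val_one,
    cons_val, mulVec, dotProduct, Fin.sum_univ_three]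
  ring

theorem det_of_mulVec_two_cyclic_sum (M : Matrix (Fin 3) (Fin 3) R) (x y z : Fin 3 → R) :
    det (of ![M *ᵥ x, M *ᵥ y, z]) + det (of ![M *ᵥ y, M *ᵥ z, x])
      + det (of ![M *ᵥ z, M *ᵥ x, y]) = principalMinorsSum M * det (of ![x, y, z]) := by
  simp only [det_fin_three, of_apply, cons_val', cons_val_fin_one, cons_val_zero, cons_val_one,
    cons_val, mulVec, dotProduct, Fin.sum_univ_three, principalMinorsSum]
  ring

end Matrix

open Matrix

theorem isOOperator_iff (T : (Fin 3 → ℂ) →ₗ[ℂ] (Fin 3 → ℂ)) :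
    IsOOperator T ↔
      det (LinearMap.toMatrix' T) • e 0 = principalMinorsSum (LinearMap.toMatrix' T) • T (e 0) := by
  set M := LinearMap.toMatrix' T
  have scaled : ∀ x y z : Fin 3 → ℂ,
      br (T x) (T y) (T z) = T (br (T x) (T y) z + br (T y) (T z) x + br (T z) (T x) y) ↔
        det (of ![x, y, z]) • (det M • e 0) = det (of ![x, y, z]) • (principalMinorsSum M • T (e 0)) := by
    intro x y z
    simp only [← LinearMap.toMatrix'_mulVec, br_eq_det_smul, ← add_smul, det_of_mulVec_three,
      det_of_mulVec_two_cyclic_sum, smul_smul, map_smul, M]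
    rw [mul_comm (det M), mul_comm (principalMinorsSum M)]
  constructor
  · intro hT
    simpa [det_of_e] using (scaled _ _ _).1 (hT (e 0) (e 1) (e 2))
  · intro h x y z
    exact (scaled x y z).2 (by rw [h])

theorem toMatrix'_eq_of_apply_e (T : (Fin 3 → ℂ) →ₗ[ℂ] (Fin 3 → ℂ)) (a13 a23 a33 : ℂ)
    (h1 : T (e 0) = a13 • e 2) (h2 : T (e 1) = a23 • e 2)
    (h3 : T (e 2) = (-(a23 / a13)) • e 0 + e 1 + a33 • e 2) :
    LinearMap.toMatrix' T = !![0, 0, -(a23 / a13); 0, 0, 1; a13, a23, a33] := by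
  ext i j
  fin_cases i <;> fin_cases j <;> simp [← e_eq_single, h1, h2, h3, e]

/-- The linear map with matrix `O₄` (with `a₁₃ ≠ 0`) is an `𝒪`-operator. -/
theorem O4_is_O_operator (T : (Fin 3 → ℂ) →ₗ[ℂ] (Fin 3 → ℂ))
    (a13 a23 a33 : ℂ) (ha : a13 ≠ 0)
    (h1 : T (e 0) = a13 • e 2)
    (h2 : T (e 1) = a23 • e 2)
    (h3 : T (e 2) = (-(a23 / a13)) • e 0 + e 1 + a33 • e 2) :
    IsOOperator T := by
  have hM := toMatrix'_eq_of_apply_e T a13 a23 a33 h1 h2 h3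
  have hdet : det (LinearMap.toMatrix' T) = 0 := by
    rw [hM]
    simp [det_fin_three]
  have hσ : principalMinorsSum (LinearMap.toMatrix' T) = 0 := by
    rw [hM]
    simp [principalMinorsSum, ha]
  rw [isOOperator_iff, hdet, hσ, zero_smul, zero_smul]
end

section
/- Let A be the 3-dimensional complex 3-Lie algebra with [e1,e2,e3] = e1, and let T have matrix O_7: T(e1) = a13 e3, T(e2) = a21 e1 + e2 + a23 e3, T(e3) = e1 + (1/a21) e2 + (a23/a21 + a13) e3, where a21 ≠ 0. Then T is an O-operator with respect to the adjoint representation. -/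
/-!
The bracket is `[x, y, z] = det (x, y, z) • e₁`. With `A` the matrix of `T`, the left side of the
identity is `det A · det (x, y, z) • e₁`, and the cyclic sum inside `T` on the right is
`tr (adj A) · det (x, y, z) • e₁`: compare the coefficients of `t` in
`det ((A + t) x, (A + t) y, (A + t) z) = det (A + t) · det (x, y, z)`. So both sides vanish once
`det A = 0` and the sum `tr (adj A)` of the principal `2 × 2` minors is `0`. For `O₇` the first row
is `a₂₁` times the second, and the principal minors are `0`, `-a₁₃` and `a₁₃`.
-/

open Finset

namespace Matrix

variable {R : Type*} [CommRing R]

theorem det_of_mulVec_fin_three (A : Matrix (Fin 3) (Fin 3) R) (x y z : Fin 3 → R) :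
    det (of ![A *ᵥ x, A *ᵥ y, A *ᵥ z]) = det A * det (of ![x, y, z]) := by
  have : of ![A *ᵥ x, A *ᵥ y, A *ᵥ z] = of ![x, y, z] * Aᵀ := by
    ext i j; fin_cases i <;> simp [mulVec, mul_apply, dotProduct, mul_comm]
  rw [this, det_mul, det_transpose, mul_comm]

theorem det_of_mulVec_mulVec_cyclic_sum (A : Matrix (Fin 3) (Fin 3) R) (x y z : Fin 3 → R) :
    det (of ![A *ᵥ x, A *ᵥ y, z]) + det (of ![A *ᵥ y, A *ᵥ z, x])
      + det (of ![A *ᵥ z, A *ᵥ x, y]) = trace (adjugate A) * det (of ![x, y, z]) := by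
  simp only [det_fin_three, adjugate_fin_three, trace_fin_three, mulVec, dotProduct,
    Fin.sum_univ_three, of_apply, cons_val', cons_val_zero, cons_val_one, Matrix.cons_val,
    cons_val_fin_one]
  ring

end Matrix

open Matrix

theorem isOOperator_of_det_eq_zero_of_trace_adjugate_eq_zero
    {T : (Fin 3 → ℂ) →ₗ[ℂ] (Fin 3 → ℂ)}
    (hdet : det (LinearMap.toMatrix' T) = 0)
    (htr : trace (adjugate (LinearMap.toMatrix' T)) = 0) : IsOOperator T := by
  intro x y z
  set A := LinearMap.toMatrix' T
  have hT : ∀ v, T v = A *ᵥ v := fun v => (LinearMap.toMatrix'_mulVec T v).symm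
  simp only [hT, br_eq_det_smul, ← add_smul, det_of_mulVec_fin_three,
    det_of_mulVec_mulVec_cyclic_sum, hdet, htr, zero_mul, zero_smul, mulVec_zero]

/-- The linear map with matrix `O₇` (with `a₂₁ ≠ 0`) is an `𝒪`-operator. -/
theorem O7_is_O_operator (T : (Fin 3 → ℂ) →ₗ[ℂ] (Fin 3 → ℂ))
    (a13 a21 a23 : ℂ) (ha : a21 ≠ 0)
    (h1 : T (e 0) = a13 • e 2)
    (h2 : T (e 1) = a21 • e 0 + e 1 + a23 • e 2)
    (h3 : T (e 2) = e 0 + (1 / a21) • e 1 + (a23 / a21 + a13) • e 2) :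
    IsOOperator T := by
  have hA : LinearMap.toMatrix' T = !![0, a21, 1; 0, 1, 1 / a21; a13, a23, a23 / a21 + a13] := by
    ext i j
    rw [LinearMap.toMatrix'_apply, ← e_eq_single]
    fin_cases j <;> fin_cases i <;> simp [h1, h2, h3, e]
  apply isOOperator_of_det_eq_zero_of_trace_adjugate_eq_zero <;> rw [hA]
  · rw [det_fin_three]
    simp only [of_apply, cons_val', cons_val_zero, cons_val_one, Matrix.cons_val, cons_val_fin_one]
    field_simp
    ring
  · rw [adjugate_fin_three_of, trace_fin_three_of]
    field_simp
    ring
end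

section
/- Let A be the 3-dimensional complex 3-Lie algebra with [e1,e2,e3] = e1. If T with matrix (a_{ij}) is an O-operator with respect to the adjoint representation and a12 ≠ 0 or a13 ≠ 0, then a11(a22 + a33) − a12 a21 − a13 a31 + a22 a33 − a23 a32 = 0. -/
/-! Every bracket lies on the line `ℂ e₁`. Feeding `e₁, e₂, e₃` into the 𝒪-operator identity,
the argument of `T` on the right is `S • e₁`, where `S` is the expression of the theorem, so the
identity says `S • T e₁ ∈ ℂ e₁`; its `e₂`- and `e₃`-components give `S a₁₂ = S a₁₃ = 0`. -/

open Finset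

theorem br_apply_of_ne_zero (x y z : Fin 3 → ℂ) {i : Fin 3} (hi : i ≠ 0) : br x y z i = 0 :=
  if_neg hi

theorem br_cyclic_basis (u v w : Fin 3 → ℂ) :
    br u v (e 2) + br v w (e 0) + br w u (e 1) =
      (u 0 * (v 1 + w 2) - u 1 * v 0 - u 2 * w 0 + v 1 * w 2 - v 2 * w 1) • e 0 := by
  funext k
  fin_cases k <;> simp [br, e]; ring

theorem apply_basis_of_eq_sum {T : (Fin 3 → ℂ) →ₗ[ℂ] (Fin 3 → ℂ)} {a : Fin 3 → Fin 3 → ℂ}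
    (hT : ∀ i, T (e i) = ∑ j, a i j • e j) (i j : Fin 3) : T (e i) j = a i j := by
  simp [hT, e]

/-- If `T` is an `𝒪`-operator and `a₁₂ ≠ 0` or `a₁₃ ≠ 0`, then
`a₁₁(a₂₂+a₃₃) − a₁₂a₂₁ − a₁₃a₃₁ + a₂₂a₃₃ − a₂₃a₃₂ = 0`. -/
theorem case_a12_or_a13_nonzero (T : (Fin 3 → ℂ) →ₗ[ℂ] (Fin 3 → ℂ))
    (a : Fin 3 → Fin 3 → ℂ) (hT : ∀ i, T (e i) = ∑ j, a i j • e j)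
    (hO : IsOOperator T)
    (h : a 0 1 ≠ 0 ∨ a 0 2 ≠ 0) :
    a 0 0 * (a 1 1 + a 2 2) - a 0 1 * a 1 0 - a 0 2 * a 2 0
      + a 1 1 * a 2 2 - a 1 2 * a 2 1 = 0 := by
  set S := a 0 0 * (a 1 1 + a 2 2) - a 0 1 * a 1 0 - a 0 2 * a 2 0
      + a 1 1 * a 2 2 - a 1 2 * a 2 1
  have hS : ∀ i ≠ 0, S * a 0 i = 0 := by
    intro i hi
    have H := congrFun (hO (e 0) (e 1) (e 2)) i
    rw [br_cyclic_basis, map_smul, br_apply_of_ne_zero _ _ _ hi] at H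
    simpa [apply_basis_of_eq_sum hT] using H.symm
  rcases h with h | h
  · exact (mul_eq_zero.mp (hS 1 (by decide))).resolve_right h
  · exact (mul_eq_zero.mp (hS 2 (by decide))).resolve_right h
end

section
/- Let A be a vector space with a trilinear operation {.,.,.} satisfying the 3-Pre-Lie axioms. Then the operation [x,y,z]^c := {x,y,z} + {y,z,x} + {z,x,y} defines a 3-Lie algebra structure on A, i.e., [.,.,.]^c is skew-symmetric and satisfies the Fundamental Identity. -/
/-!
Write `L(x, y) z = {x, y, z}`. Expanding `[a, b, [c, d, e]ᶜ]ᶜ` along its first slot, the term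
`L(a, b) [c, d, e]ᶜ` is handled by axiom (ii), which turns each commutator `[L(a, b), L(c, d)]`
into `L([a, b, c]ᶜ, d) + L(c, [a, b, d]ᶜ)`, while the two terms with `[c, d, e]ᶜ` in the first slot
are expanded by axiom (iii). After this the nine resulting summands are exactly the nine summands
of the right-hand side of the Fundamental Identity.
-/

section

variable {R M : Type*} [CommSemiring R] [AddCommGroup M] [Module R M]

def cyclicBracket (p : M →ₗ[R] M →ₗ[R] M →ₗ[R] M) (x y z : M) : M :=
  p x y z + p y z x + p z x y

structure IsThreePreLie (p : M →ₗ[R] M →ₗ[R] M →ₗ[R] M) : Prop where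
  skew : ∀ x y z, p x y z = -p y x z
  left_comm : ∀ x₁ x₂ x₃ x₄ x₅, p x₁ x₂ (p x₃ x₄ x₅) =
    p (cyclicBracket p x₁ x₂ x₃) x₄ x₅ + p x₃ (cyclicBracket p x₁ x₂ x₄) x₅ + p x₃ x₄ (p x₁ x₂ x₅)
  cyclicBracket_left : ∀ x₁ x₂ x₃ x₄ x₅, p (cyclicBracket p x₁ x₂ x₃) x₄ x₅ =
    p x₁ x₂ (p x₃ x₄ x₅) + p x₂ x₃ (p x₁ x₄ x₅) + p x₃ x₁ (p x₂ x₄ x₅)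

namespace cyclicBracket

variable (p : M →ₗ[R] M →ₗ[R] M →ₗ[R] M)

theorem rotate (x y z : M) : cyclicBracket p x y z = cyclicBracket p y z x := by
  unfold cyclicBracket; abel

variable {p}

theorem swap_left (hskew : ∀ x y z, p x y z = -p y x z) (x y z : M) :
    cyclicBracket p x y z = -cyclicBracket p y x z := by
  unfold cyclicBracket
  rw [hskew y x z, hskew x z y, hskew z y x]
  abel

theorem swap_right (hskew : ∀ x y z, p x y z = -p y x z) (x y z : M) :
    cyclicBracket p x y z = -cyclicBracket p x z y := by
  rw [rotate p x y z, rotate p y z x, swap_left hskew]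

theorem eq_add_sub (hskew : ∀ x y z, p x y z = -p y x z) (x y z : M) :
    cyclicBracket p x y z = p x y z + (p z x y - p z y x) := by
  unfold cyclicBracket
  rw [hskew y z x]
  abel

end cyclicBracket

namespace IsThreePreLie

variable {p : M →ₗ[R] M →ₗ[R] M →ₗ[R] M}

theorem cyclicBracket_left_sub (hp : IsThreePreLie p) (a b c d e : M) :
    p (cyclicBracket p c d e) a b - p (cyclicBracket p c d e) b a =
      p c d (cyclicBracket p a b e - p a b e) + p d e (cyclicBracket p a b c - p a b c) +
        p e c (cyclicBracket p a b d - p a b d) := by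
  have h (x : M) : cyclicBracket p a b x - p a b x = p x a b - p x b a := by
    rw [cyclicBracket.eq_add_sub hp.skew]
    abel
  rw [h, h, h, hp.cyclicBracket_left, hp.cyclicBracket_left]
  simp only [map_sub]
  abel

theorem cyclicBracket_fundamental (hp : IsThreePreLie p) (a b c d e : M) :
    cyclicBracket p a b (cyclicBracket p c d e) =
      cyclicBracket p (cyclicBracket p a b c) d e + cyclicBracket p c (cyclicBracket p a b d) e +
        cyclicBracket p c d (cyclicBracket p a b e) := by
  rw [cyclicBracket.eq_add_sub hp.skew, hp.cyclicBracket_left_sub]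
  conv_lhs => rw [cyclicBracket]
  simp only [map_add, map_sub]
  rw [hp.left_comm a b c d e, hp.left_comm a b d e c, hp.left_comm a b e c d]
  simp only [cyclicBracket, map_add, LinearMap.add_apply]
  abel

end IsThreePreLie

end

/-- The sub-adjacent bracket of a 3-Pre-Lie algebra is a 3-Lie bracket:
it is skew-symmetric and satisfies the Fundamental Identity. -/
theorem sub_adjacent_is_three_Lie (M : Type*) [AddCommGroup M] [Module ℂ M]
    (p : M →ₗ[ℂ] M →ₗ[ℂ] M →ₗ[ℂ] M)
    (hskew : ∀ x y z, p x y z = - p y x z)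
    (hii : ∀ x1 x2 x3 x4 x5, p x1 x2 (p x3 x4 x5) =
      p (p x1 x2 x3 + p x2 x3 x1 + p x3 x1 x2) x4 x5
        + p x3 (p x1 x2 x4 + p x2 x4 x1 + p x4 x1 x2) x5
        + p x3 x4 (p x1 x2 x5))
    (hiii : ∀ x1 x2 x3 x4 x5, p (p x1 x2 x3 + p x2 x3 x1 + p x3 x1 x2) x4 x5 =
      p x1 x2 (p x3 x4 x5) + p x2 x3 (p x1 x4 x5) + p x3 x1 (p x2 x4 x5)) :
    -- the sub-adjacent bracket
    (∀ x y z, (p x y z + p y z x + p z x y) = -(p y x z + p x z y + p z y x)) ∧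
    (∀ x y z, (p x y z + p y z x + p z x y) = -(p x z y + p z y x + p y x z)) ∧
    (∀ x1 x2 x3 x4 x5,
      let brc : M → M → M → M := fun x y z => p x y z + p y z x + p z x y
      brc x1 x2 (brc x3 x4 x5) =
        brc (brc x1 x2 x3) x4 x5 + brc x3 (brc x1 x2 x4) x5 + brc x3 x4 (brc x1 x2 x5)) := by
  have hp : IsThreePreLie p := ⟨hskew, hii, hiii⟩
  exact ⟨cyclicBracket.swap_left hskew, cyclicBracket.swap_right hskew,
    fun _ _ _ _ _ => hp.cyclicBracket_fundamental _ _ _ _ _⟩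
end

section
/- Let (A,[.,.,.]) be a 3-Lie algebra and T : A → A an O-operator with respect to the adjoint representation. Then the operation {x,y,z} := [Tx,Ty,z] defines a 3-Pre-Lie algebra structure on A. -/
/-! Since `T` is an `𝒪`-operator, `T [x,y,z]^c = [Tx,Ty,Tz]`, so both compatibility identities of
`{x,y,z} = [Tx,Ty,z]` become identities of the bracket on `Tx₁, …, Tx₄, x₅`: the first one is the
fundamental identity itself, the second one its derived form, which follows from the fundamental
identity by skew-symmetry. -/

namespace ThreeLie

variable {M : Type*} [AddCommGroup M] {f : M → M → M → M}

lemma apply_cyclic (hskew1 : ∀ x y z, f x y z = - f y x z) (hskew2 : ∀ x y z, f x y z = - f x z y)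
    (x y z : M) : f x y z = f y z x := by
  rw [hskew1, hskew2, neg_neg]

lemma fundamental_identity_derived (hskew1 : ∀ x y z, f x y z = - f y x z)
    (hskew2 : ∀ x y z, f x y z = - f x z y)
    (hFI : ∀ x1 x2 x3 x4 x5, f x1 x2 (f x3 x4 x5) =
      f (f x1 x2 x3) x4 x5 + f x3 (f x1 x2 x4) x5 + f x3 x4 (f x1 x2 x5))
    (a b c d e : M) :
    f (f a b c) d e = f a b (f c d e) + f b c (f a d e) + f c a (f b d e) := by
  have cyc := apply_cyclic hskew1 hskew2
  rw [cyc (f a b c) d e, hFI d e a b c, ← cyc a d e, ← cyc b d e, ← cyc c d e,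
    cyc (f a d e) b c, ← cyc c a (f b d e)]
  abel

end ThreeLie

/-- An `𝒪`-operator `T` with respect to the adjoint representation of a 3-Lie algebra
induces a 3-Pre-Lie structure `{x,y,z} = [Tx,Ty,z]`. -/
theorem o_operator_induces_three_pre_Lie (M : Type*) [AddCommGroup M] [Module ℂ M]
    (f : M →ₗ[ℂ] M →ₗ[ℂ] M →ₗ[ℂ] M)
    (hskew1 : ∀ x y z, f x y z = - f y x z)
    (hskew2 : ∀ x y z, f x y z = - f x z y)
    (hFI : ∀ x1 x2 x3 x4 x5, f x1 x2 (f x3 x4 x5) =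
      f (f x1 x2 x3) x4 x5 + f x3 (f x1 x2 x4) x5 + f x3 x4 (f x1 x2 x5))
    (T : M →ₗ[ℂ] M)
    (hT : ∀ x y z, f (T x) (T y) (T z) =
      T (f (T x) (T y) z + f (T y) (T z) x + f (T z) (T x) y)) :
    let p : M → M → M → M := fun x y z => f (T x) (T y) z
    (∀ x y z, p x y z = - p y x z) ∧
    (∀ x1 x2 x3 x4 x5, p x1 x2 (p x3 x4 x5) =
      p (p x1 x2 x3 + p x2 x3 x1 + p x3 x1 x2) x4 x5
        + p x3 (p x1 x2 x4 + p x2 x4 x1 + p x4 x1 x2) x5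
        + p x3 x4 (p x1 x2 x5)) ∧
    (∀ x1 x2 x3 x4 x5, p (p x1 x2 x3 + p x2 x3 x1 + p x3 x1 x2) x4 x5 =
      p x1 x2 (p x3 x4 x5) + p x2 x3 (p x1 x4 x5) + p x3 x1 (p x2 x4 x5)) := by
  intro p
  refine ⟨fun x y z => hskew1 (T x) (T y) z, fun x1 x2 x3 x4 x5 => ?_,
    fun x1 x2 x3 x4 x5 => ?_⟩
  · simp only [p]
    rw [← hT x1 x2 x3, ← hT x1 x2 x4]
    exact hFI _ _ _ _ _
  · simp only [p]
    rw [← hT x1 x2 x3]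
    exact ThreeLie.fundamental_identity_derived hskew1 hskew2 hFI _ _ _ _ _
end

section
/- Every 2-dimensional 3-Pre-Lie algebra structure on a 2-dimensional vector space is automatically a 3-Pre-Lie algebra: any trilinear operation {.,.,.} on a 2-dimensional space satisfying only the skew-symmetry {x,y,z} = −{y,x,z} automatically satisfies the two remaining 3-Pre-Lie axioms. Equivalently, in dimension 2, the 3-Pre-Lie identities (ii) and (iii) impose no constraint beyond trilinearity and skew-symmetry in the first two arguments. -/
/-!
Since `p x y` is bilinear and alternating in `(x, y)` on a plane, it factors through the
determinant: `p x y = det (x, y) • q` for the single operator `q = p e₀ e₁`. The cyclic sum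
`{x, y, z} + {y, z, x} + {z, x, y}` is then `q` applied to
`det (x, y) • z + det (y, z) • x + det (z, x) • y = 0`, so it vanishes, which removes every
`[·, ·, ·]^c` term from the two axioms. What is left are the identities
`det₁₂ det₃₄ = det₃₄ det₁₂` and the Plücker relation `det₁₂ det₃₄ + det₂₃ det₁₄ + det₃₁ det₂₄ = 0`,
each multiplying `q ∘ q`.
-/

variable {R N : Type*} [CommRing R] [AddCommGroup N] [Module R N]

def det2 (x y : Fin 2 → R) : R := (Matrix.of ![x, y]).det

lemma det2_eq (x y : Fin 2 → R) : det2 x y = x 0 * y 1 - x 1 * y 0 :=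
  Matrix.det_fin_two _

lemma det2_smul_add_cyclic (x y z : Fin 2 → R) :
    det2 x y • z + det2 y z • x + det2 z x • y = 0 := by
  ext i
  simp only [det2_eq, Pi.add_apply, Pi.smul_apply, smul_eq_mul, Pi.zero_apply]
  fin_cases i <;> simp only [Fin.zero_eta, Fin.mk_one] <;> ring

lemma det2_mul_add_cyclic (x₁ x₂ x₃ x₄ : Fin 2 → R) :
    det2 x₁ x₂ * det2 x₃ x₄ + det2 x₂ x₃ * det2 x₁ x₄ + det2 x₃ x₁ * det2 x₂ x₄ = 0 := by
  simp only [det2_eq]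
  ring

namespace LinearMap.IsAlt

lemma apply_eq_det2_smul {B : (Fin 2 → R) →ₗ[R] (Fin 2 → R) →ₗ[R] N} (hB : B.IsAlt)
    (x y : Fin 2 → R) : B x y = det2 x y • B (Pi.single 0 1) (Pi.single 1 1) := by
  have hdecomp : ∀ v : Fin 2 → R, v = v 0 • Pi.single 0 1 + v 1 • Pi.single 1 1 := fun v => by
    ext i
    fin_cases i <;> simp
  conv_lhs => rw [hdecomp x, hdecomp y]
  simp only [map_add, map_smul, LinearMap.add_apply, LinearMap.smul_apply, hB.self_eq_zero,
    ← hB.neg (Pi.single 0 1), smul_zero, smul_neg, det2_eq]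
  module

lemma add_cyclic_eq_zero {p : (Fin 2 → R) →ₗ[R] (Fin 2 → R) →ₗ[R] (Fin 2 → R) →ₗ[R] N}
    (hp : p.IsAlt) (x y z : Fin 2 → R) : p x y z + p y z x + p z x y = 0 :=
  calc p x y z + p y z x + p z x y
      = p (Pi.single 0 1) (Pi.single 1 1) (det2 x y • z + det2 y z • x + det2 z x • y) := by
        rw [hp.apply_eq_det2_smul x, hp.apply_eq_det2_smul y, hp.apply_eq_det2_smul z]
        simp only [LinearMap.smul_apply, map_add, map_smul]
    _ = 0 := by rw [det2_smul_add_cyclic, map_zero]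

variable {M : Type*} [AddCommGroup M] [Module R M]

lemma apply_apply_comm {p : (Fin 2 → R) →ₗ[R] (Fin 2 → R) →ₗ[R] M →ₗ[R] M}
    (hp : p.IsAlt) (x₁ x₂ x₃ x₄ : Fin 2 → R) (v : M) :
    p x₁ x₂ (p x₃ x₄ v) = p x₃ x₄ (p x₁ x₂ v) := by
  simp only [hp.apply_eq_det2_smul x₁, hp.apply_eq_det2_smul x₃, LinearMap.smul_apply, map_smul]
  exact smul_comm _ _ _

lemma apply_apply_add_cyclic_eq_zero {p : (Fin 2 → R) →ₗ[R] (Fin 2 → R) →ₗ[R] M →ₗ[R] M}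
    (hp : p.IsAlt) (x₁ x₂ x₃ x₄ : Fin 2 → R) (v : M) :
    p x₁ x₂ (p x₃ x₄ v) + p x₂ x₃ (p x₁ x₄ v) + p x₃ x₁ (p x₂ x₄ v) = 0 := by
  simp only [hp.apply_eq_det2_smul x₁, hp.apply_eq_det2_smul x₂, hp.apply_eq_det2_smul x₃,
    LinearMap.smul_apply, map_smul, smul_smul, ← add_smul]
  convert zero_smul R _ using 2
  linear_combination det2_mul_add_cyclic x₁ x₂ x₃ x₄

end LinearMap.IsAlt

/-- On a 2-dimensional complex vector space, any trilinear operation that is skew-symmetric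
in its first two arguments automatically satisfies the remaining two 3-Pre-Lie axioms. -/
theorem two_dim_three_pre_Lie_trivial
    (p : (Fin 2 → ℂ) →ₗ[ℂ] (Fin 2 → ℂ) →ₗ[ℂ] (Fin 2 → ℂ) →ₗ[ℂ] (Fin 2 → ℂ))
    (hskew : ∀ x y z, p x y z = - p y x z) :
    (∀ x1 x2 x3 x4 x5, p x1 x2 (p x3 x4 x5) =
      p (p x1 x2 x3 + p x2 x3 x1 + p x3 x1 x2) x4 x5
        + p x3 (p x1 x2 x4 + p x2 x4 x1 + p x4 x1 x2) x5
        + p x3 x4 (p x1 x2 x5)) ∧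
    (∀ x1 x2 x3 x4 x5, p (p x1 x2 x3 + p x2 x3 x1 + p x3 x1 x2) x4 x5 =
      p x1 x2 (p x3 x4 x5) + p x2 x3 (p x1 x4 x5) + p x3 x1 (p x2 x4 x5)) := by
  have hp : p.IsAlt := fun x => LinearMap.ext fun z => self_eq_neg.mp (hskew x x z)
  refine ⟨fun x1 x2 x3 x4 x5 => ?_, fun x1 x2 x3 x4 x5 => ?_⟩
  · rw [hp.add_cyclic_eq_zero, hp.add_cyclic_eq_zero, map_zero, map_zero, LinearMap.zero_apply,
      LinearMap.zero_apply, zero_add, zero_add, hp.apply_apply_comm]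
  · rw [hp.add_cyclic_eq_zero, map_zero, LinearMap.zero_apply, LinearMap.zero_apply,
      hp.apply_apply_add_cyclic_eq_zero]
end

section
/- Let A6 = A ⊕ A* be the 6-dimensional 3-Lie algebra with basis e1,e2,e3,e1*,e2*,e3* and nonzero brackets [e1,e2,e3] = e1, [e1,e2,e1*] = −e3*, [e1,e3,e1*] = e2*, [e2,e3,e1*] = −e1*. Then r := e2* ⊗ (a21 e1 + a22 e2 + a23 e3) − (a21 e1 + a22 e2 + a23 e3) ⊗ e2* + e3* ⊗ (a31 e1 + a32 e2 + a33 e3) − (a31 e1 + a32 e2 + a33 e3) ⊗ e3* is a skew-symmetric solution of the 3-Lie classical Yang-Baxter equation [[r,r,r]] = 0 in A6, for all complex parameters a21,...,a33. -/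
open Finset

/-- The standard basis of `ℂ⁶`: `u 0,u 1,u 2 = e₁,e₂,e₃` and `u 3,u 4,u 5 = e₁*,e₂*,e₃*`. -/
def u (i : Fin 6) : Fin 6 → ℂ := fun j => if j = i then 1 else 0

/-- The alternating 3×3 minor of the coordinates `i,j,k` of `x,y,z`. -/
def m3 (x y z : Fin 6 → ℂ) (i j k : Fin 6) : ℂ :=
  x i * (y j * z k - y k * z j) - x j * (y i * z k - y k * z i)
    + x k * (y i * z j - y j * z i)

/-- The trilinear skew-symmetric bracket of the 6-dimensional 3-Lie algebra
`A ⋉_{ad*} A*` with nonzero basis brackets `[e₁,e₂,e₃] = e₁`, `[e₁,e₂,e₁*] = −e₃*`,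
`[e₁,e₃,e₁*] = e₂*`, `[e₂,e₃,e₁*] = −e₁*`. -/
def br6 (x y z : Fin 6 → ℂ) : Fin 6 → ℂ :=
  m3 x y z 0 1 2 • u 0 - m3 x y z 0 1 3 • u 5 + m3 x y z 0 2 3 • u 4
    - m3 x y z 1 2 3 • u 3

/-- The elementary tensor `x ⊗ y`, in coordinates. -/
def tens (x y : Fin 6 → ℂ) : Fin 6 → Fin 6 → ℂ := fun i j => x i * y j

open Submodule

/-! The tensor `r` lies in `V ⊗ V` for `V = span {w₂, w₃, e₂*, e₃*}`, and `V` is an abelian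
subalgebra: its vectors have no `e₁*`-component, which kills every bracket but `[e₁,e₂,e₃]`, and
their `A`-components lie in the plane `span {w₂, w₃}`, so that this one is a vanishing `3 × 3`
determinant. Each of the four terms of `[[r,r,r]]` is a bracket of rows and columns of `r`, all
of which lie in `V`. -/

lemma sum_mul_br6_basis (f g h : Fin 6 → ℂ) (α : Fin 6) :
    ∑ i, ∑ j, ∑ k, f i * g j * h k * br6 (u i) (u j) (u k) α = br6 f g h α := by
  fin_cases α <;> simp [Fin.sum_univ_six, br6, m3, u] <;> ring

lemma br6_eq_zero_of_mem_span {p q : Fin 6 → ℂ} (hp : p 3 = 0) (hq : q 3 = 0)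
    {x y z : Fin 6 → ℂ} (hx : x ∈ span ℂ {p, q, u 4, u 5}) (hy : y ∈ span ℂ {p, q, u 4, u 5})
    (hz : z ∈ span ℂ {p, q, u 4, u 5}) : br6 x y z = 0 := by
  have coeffs : ∀ v ∈ span ℂ {p, q, u 4, u 5}, ∃ a b c d : ℂ,
      v = a • p + (b • q + (c • u 4 + d • u 5)) := by
    intro v hv
    obtain ⟨a, v', hv', rfl⟩ := mem_span_insert.1 hv
    obtain ⟨b, v'', hv'', rfl⟩ := mem_span_insert.1 hv'
    obtain ⟨c, d, rfl⟩ := mem_span_pair.1 hv''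
    exact ⟨a, b, c, d, rfl⟩
  obtain ⟨a₁, b₁, c₁, d₁, rfl⟩ := coeffs x hx
  obtain ⟨a₂, b₂, c₂, d₂, rfl⟩ := coeffs y hy
  obtain ⟨a₃, b₃, c₃, d₃, rfl⟩ := coeffs z hz
  funext α
  simp only [br6, m3, u, Pi.add_apply, Pi.sub_apply, Pi.smul_apply, smul_eq_mul, hp, hq,
    Fin.isValue, Fin.reduceEq, if_false, Pi.zero_apply]
  ring

lemma cybe_of_rows_cols_mem {V : Submodule ℂ (Fin 6 → ℂ)}
    (hV : ∀ x ∈ V, ∀ y ∈ V, ∀ z ∈ V, br6 x y z = 0) {r : Fin 6 → Fin 6 → ℂ}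
    (hrow : ∀ α, r α ∈ V) (hcol : ∀ β, (fun i => r i β) ∈ V) (α β γ δ : Fin 6) :
    (∑ i, ∑ j, ∑ k, r i β * r j γ * r k δ * br6 (u i) (u j) (u k) α)
      + (∑ i, ∑ j, ∑ k, r α i * r j γ * r k δ * br6 (u i) (u j) (u k) β)
      + (∑ i, ∑ j, ∑ k, r α i * r β j * r k δ * br6 (u i) (u j) (u k) γ)
      + (∑ i, ∑ j, ∑ k, r α i * r β j * r γ k * br6 (u i) (u j) (u k) δ) = 0 := by
  simp only [sum_mul_br6_basis]
  rw [hV _ (hcol β) _ (hcol γ) _ (hcol δ), hV _ (hrow α) _ (hcol γ) _ (hcol δ),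
    hV _ (hrow α) _ (hrow β) _ (hcol δ), hV _ (hrow α) _ (hrow β) _ (hrow γ)]
  simp

/-- `r = e₂* ⊗ w₂ − w₂ ⊗ e₂* + e₃* ⊗ w₃ − w₃ ⊗ e₃*` is a skew-symmetric solution of the
3-Lie classical Yang–Baxter equation `[[r,r,r]] = 0` in the 6-dimensional 3-Lie algebra
`A ⋉_{ad*} A*` (written in coordinates with respect to the basis `u`). -/
theorem r1_solves_three_Lie_CYBE (a21 a22 a23 a31 a32 a33 : ℂ) :
    let w2 : Fin 6 → ℂ := a21 • u 0 + a22 • u 1 + a23 • u 2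
    let w3 : Fin 6 → ℂ := a31 • u 0 + a32 • u 1 + a33 • u 2
    let r : Fin 6 → Fin 6 → ℂ :=
      tens (u 4) w2 - tens w2 (u 4) + tens (u 5) w3 - tens w3 (u 5)
    (∀ i j, r i j = - r j i) ∧
    (∀ α β γ δ : Fin 6,
      (∑ i, ∑ j, ∑ k, r i β * r j γ * r k δ * br6 (u i) (u j) (u k) α)
        + (∑ i, ∑ j, ∑ k, r α i * r j γ * r k δ * br6 (u i) (u j) (u k) β)
        + (∑ i, ∑ j, ∑ k, r α i * r β j * r k δ * br6 (u i) (u j) (u k) γ)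
        + (∑ i, ∑ j, ∑ k, r α i * r β j * r γ k * br6 (u i) (u j) (u k) δ) = 0) := by
  intro w2 w3 r
  set V := span ℂ {w2, w3, u 4, u 5}
  have hw2 : w2 ∈ V := subset_span (by simp)
  have hw3 : w3 ∈ V := subset_span (by simp)
  have he2 : u 4 ∈ V := subset_span (by simp)
  have he3 : u 5 ∈ V := subset_span (by simp)
  have hrow : ∀ α, r α = u 4 α • w2 - w2 α • u 4 + u 5 α • w3 - w3 α • u 5 := by
    intro α; funext j; simp only [r, tens, Pi.add_apply, Pi.sub_apply, Pi.smul_apply, smul_eq_mul]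
  have hcol : ∀ β, (fun i => r i β) = w2 β • u 4 - u 4 β • w2 + w3 β • u 5 - u 5 β • w3 := by
    intro β; funext i; simp only [r, tens, Pi.add_apply, Pi.sub_apply, Pi.smul_apply, smul_eq_mul]
    ring
  refine ⟨fun i j => by simp only [r, tens, Pi.add_apply, Pi.sub_apply]; ring, ?_⟩
  refine cybe_of_rows_cols_mem (V := V) (fun x hx y hy z hz => ?_) (fun α => ?_) (fun β => ?_)
  · exact br6_eq_zero_of_mem_span (by simp [w2, u]) (by simp [w3, u]) hx hy hz
  · rw [hrow]
    exact sub_mem (add_mem (sub_mem (smul_mem _ _ hw2) (smul_mem _ _ he2))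
      (smul_mem _ _ hw3)) (smul_mem _ _ he3)
  · rw [hcol]
    exact sub_mem (add_mem (sub_mem (smul_mem _ _ he2) (smul_mem _ _ hw2))
      (smul_mem _ _ he3)) (smul_mem _ _ hw3)
end
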